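/- arXiv:1307.2786 — 2 statements merged into one kernel-verified Lean document; each statement's English description precedes it below -/
import Mathlib

section
/- Let $H \in \mathbb{R}^{n\times n}$ be symmetric with $h_{ij} \leq 0$ for $i \neq j$, and let $r \in \mathbb{R}^n$ with $r_i > 0$ for all $i$. For positive $c \in \mathbb{R}^n$, define $F(c) = -\frac{1}{2} \sum_{i=1}^n \sum_{j \neq i} h_{ij} r_i r_j \frac{c_j}{c_i}$. Then $F(c) \geq F(\mathbf{1})$ for every positive vector $c$, where $\mathbf{1}$ is the all-ones vector. -/
/-! Pairing the $(i,j)$ and $(j,i)$ terms of the double sum, each pair contributes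
$a_{ij}(c_j/c_i + c_i/c_j)$ with $a_{ij} = h_{ij} r_i r_j \le 0$, and $c_j/c_i + c_i/c_j \ge 2$
by AM-GM, with equality at $c = \mathbf{1}$. -/

open Finset

theorem two_le_div_add_div {x y : ℝ} (hx : 0 < x) (hy : 0 < y) : 2 ≤ y / x + x / y := by
  rw [div_add_div _ _ hx.ne' hy.ne', le_div_iff₀ (mul_pos hx hy)]
  nlinarith [sq_nonneg (x - y)]

theorem mul_div_add_mul_div_le_two_mul {a x y : ℝ} (ha : a ≤ 0) (hx : 0 < x) (hy : 0 < y) :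
    a * (y / x) + a * (x / y) ≤ 2 * a := by
  rw [← mul_add, mul_comm 2 a]
  exact mul_le_mul_of_nonpos_left (two_le_div_add_div hx hy) ha

theorem Finset.sum_sum_erase_comm {ι M : Type*} [Fintype ι] [DecidableEq ι] [AddCommMonoid M]
    (f : ι → ι → M) :
    ∑ i, ∑ j ∈ univ.erase i, f i j = ∑ i, ∑ j ∈ univ.erase i, f j i :=
  sum_comm' fun i j => by simp [ne_comm]

theorem sum_sum_erase_mul_div_le {ι : Type*} [Fintype ι] [DecidableEq ι] (a : ι → ι → ℝ)
    (hsymm : ∀ i j, a j i = a i j) (hnonpos : ∀ i j, i ≠ j → a i j ≤ 0)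
    (c : ι → ℝ) (hc : ∀ i, 0 < c i) :
    ∑ i, ∑ j ∈ univ.erase i, a i j * (c j / c i) ≤ ∑ i, ∑ j ∈ univ.erase i, a i j := by
  have hswap : ∑ i, ∑ j ∈ univ.erase i, a i j * (c j / c i) =
      ∑ i, ∑ j ∈ univ.erase i, a i j * (c i / c j) := by
    rw [sum_sum_erase_comm]
    simp only [hsymm]
  have hpair : ∑ i, ∑ j ∈ univ.erase i, (a i j * (c j / c i) + a i j * (c i / c j)) ≤
      ∑ i, ∑ j ∈ univ.erase i, 2 * a i j :=
    sum_le_sum fun i _ => sum_le_sum fun j hj =>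
      mul_div_add_mul_div_le_two_mul (hnonpos i j (ne_of_mem_erase hj).symm) (hc i) (hc j)
  simp only [sum_add_distrib, ← mul_sum, ← hswap] at hpair
  linarith

theorem stmt_3 (n : ℕ) (H : Matrix (Fin n) (Fin n) ℝ) (hsym : H.IsSymm)
    (hoff : ∀ i j, i ≠ j → H i j ≤ 0) (r : Fin n → ℝ) (hr : ∀ i, 0 < r i)
    (c : Fin n → ℝ) (hc : ∀ i, 0 < c i) :
    -(1/2) * ∑ i, ∑ j ∈ Finset.univ.erase i, H i j * r i * r j * (c j / c i) ≥
    -(1/2) * ∑ i, ∑ j ∈ Finset.univ.erase i, H i j * r i * r j * ((1:ℝ) / 1) := by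
  have hweight := sum_sum_erase_mul_div_le (fun i j => H i j * r i * r j)
    (fun i j => by rw [hsym.apply, mul_right_comm])
    (fun i j hij => mul_nonpos_of_nonpos_of_nonneg
      (mul_nonpos_of_nonpos_of_nonneg (hoff i j hij) (hr i).le) (hr j).le)
    c hc
  simp only [div_one, mul_one]
  linarith
end

section
/- Let $H \in \mathbb{R}^{n\times n}$ be symmetric with $h_{ij} \leq 0$ for $i \neq j$, let $d > 0$, and define $\alpha_i = \max\{0, -\frac{1}{2}(h_{ii} + \sum_{j\neq i} h_{ij} d_j/d_i)\}$. Then the matrix $H + 2\,\mathrm{diag}(\alpha)$ is positive semidefinite. -/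
/-!
The shifted matrix `M = H + 2 diag(α)` is symmetric, has nonpositive off-diagonal entries, and the
choice of `α` makes `M d ≥ 0` componentwise. Conjugating by `D = diag(d)` gives a symmetric matrix
`A = D M D` with nonpositive off-diagonal entries and nonnegative row sums, and for such a matrix
`yᵀ A y = ∑ᵢ (∑ⱼ Aᵢⱼ) yᵢ² - ½ ∑ᵢⱼ Aᵢⱼ (yᵢ - yⱼ)²` is a sum of nonnegative terms.
-/

open Matrix

namespace Matrix

variable {ι R : Type*} [Fintype ι]

theorem sum_mul_sub_sq_eq [CommRing R] {A : Matrix ι ι R} (hA : A.IsSymm) (y : ι → R) :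
    ∑ i, ∑ j, A i j * (y i - y j) ^ 2 = 2 * (∑ i, (∑ j, A i j) * y i ^ 2 - y ⬝ᵥ (A *ᵥ y)) := by
  have hswap : ∑ i, ∑ j, A i j * y j ^ 2 = ∑ i, (∑ j, A i j) * y i ^ 2 := by
    rw [Finset.sum_comm]
    simp only [Finset.sum_mul, hA.apply]
  have hexpand : ∀ i j, A i j * (y i - y j) ^ 2
      = A i j * y i ^ 2 + A i j * y j ^ 2 - 2 * (y i * (A i j * y j)) := fun i j ↦ by ring
  simp only [hexpand, Finset.sum_sub_distrib, Finset.sum_add_distrib, hswap, ← Finset.sum_mul,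
    ← Finset.mul_sum, dotProduct, mulVec]
  ring

theorem posSemidef_of_offDiag_nonpos_of_sum_nonneg [CommRing R] [LinearOrder R]
    [IsStrictOrderedRing R] [StarRing R] [TrivialStar R] {A : Matrix ι ι R} (hA : A.IsSymm)
    (hoff : ∀ i j, i ≠ j → A i j ≤ 0) (hrow : ∀ i, 0 ≤ ∑ j, A i j) : A.PosSemidef := by
  refine .of_dotProduct_mulVec_nonneg (isHermitian_iff_isSymm.2 hA) fun y ↦ ?_
  have hdiff : ∑ i, ∑ j, A i j * (y i - y j) ^ 2 ≤ 0 := by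
    refine Finset.sum_nonpos fun i _ ↦ Finset.sum_nonpos fun j _ ↦ ?_
    rcases eq_or_ne i j with rfl | hij
    · simp
    · exact mul_nonpos_of_nonpos_of_nonneg (hoff i j hij) (sq_nonneg _)
  have hdiag : 0 ≤ ∑ i, (∑ j, A i j) * y i ^ 2 :=
    Finset.sum_nonneg fun i _ ↦ mul_nonneg (hrow i) (sq_nonneg _)
  rw [star_trivial]
  linarith [sum_mul_sub_sq_eq hA y]

theorem posSemidef_of_offDiag_nonpos_of_mulVec_nonneg [Field R] [LinearOrder R]
    [IsStrictOrderedRing R] [StarRing R] [TrivialStar R] [DecidableEq ι] {M : Matrix ι ι R}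
    (hM : M.IsSymm) (hoff : ∀ i j, i ≠ j → M i j ≤ 0) {d : ι → R} (hd : ∀ i, 0 < d i)
    (hMd : ∀ i, 0 ≤ (M *ᵥ d) i) : M.PosSemidef := by
  have hD : IsUnit (diagonal d) :=
    isUnit_diagonal.2 (Pi.isUnit_iff.2 fun i ↦ (hd i).ne'.isUnit)
  rw [← IsUnit.posSemidef_star_left_conjugate_iff hD]
  have hentry : ∀ i j, (star (diagonal d) * M * diagonal d) i j = d i * M i j * d j := by
    intro i j
    simp [star_eq_conjTranspose, diagonal_mul, mul_diagonal]
  refine posSemidef_of_offDiag_nonpos_of_sum_nonneg ?_ ?_ ?_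
  · exact IsSymm.ext fun i j ↦ by rw [hentry, hentry, hM.apply]; ring
  · intro i j hij
    rw [hentry]
    exact mul_nonpos_of_nonpos_of_nonneg
      (mul_nonpos_of_nonneg_of_nonpos (hd i).le (hoff i j hij)) (hd j).le
  · intro i
    simp only [hentry, mul_assoc, ← Finset.mul_sum]
    exact mul_nonneg (hd i).le (hMd i)

end Matrix

theorem stmt_14 (n : ℕ) (H : Matrix (Fin n) (Fin n) ℝ) (hsym : H.IsSymm)
    (hoff : ∀ i j, i ≠ j → H i j ≤ 0)
    (d : Fin n → ℝ) (hd : ∀ i, 0 < d i)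
    (α : Fin n → ℝ)
    (hα : ∀ i, α i = max 0 (-(1/2) * (H i i + ∑ j ∈ Finset.univ.erase i, H i j * d j / d i))) :
    (H + 2 • Matrix.diagonal α).PosSemidef := by
  refine posSemidef_of_offDiag_nonpos_of_mulVec_nonneg
    (hsym.add ((isSymm_diagonal α).smul 2)) (fun i j hij ↦ ?_) hd fun i ↦ ?_
  · rw [Matrix.add_apply, Matrix.smul_apply, diagonal_apply_ne _ hij, smul_zero, add_zero]
    exact hoff i j hij
  · have hrow : (H *ᵥ d) i = d i * (H i i + ∑ j ∈ Finset.univ.erase i, H i j * d j / d i) := by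
      rw [mulVec, dotProduct, ← Finset.add_sum_erase _ _ (Finset.mem_univ i), mul_add,
        Finset.mul_sum]
      congr 1
      · ring
      · exact Finset.sum_congr rfl fun j _ ↦ by field_simp [(hd i).ne']
    have hshift : 0 ≤ H i i + ∑ j ∈ Finset.univ.erase i, H i j * d j / d i + 2 * α i := by
      linarith [hα i ▸ le_max_right 0 _]
    rw [add_mulVec, smul_mulVec, Pi.add_apply, Pi.smul_apply, mulVec_diagonal, hrow, nsmul_eq_mul]
    linarith [mul_nonneg (hd i).le hshift]
end
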